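/- arXiv:2007.06025 — 6 statements merged into one kernel-verified Lean document; each statement's English description precedes it below -/
import Mathlib

section
/- Suppose ft^n ∈ R[t] with f ∈ R and n > 0 satisfies an integral equation over the graded ring A = ⊕_{m≥0} I(mD) t^m, where I(mD) = { g ∈ R : μ_j(g) ≥ ⌈m α_j⌉ for all j } for fixed dominating valuations μ_j and positive reals α_j. Then μ_j(f) ≥ ⌈n α_j⌉ for all j; i.e., f ∈ I(nD). -/
noncomputable section

/-- A valuation of the quotient field of a local domain `R` that dominates `R`. -/
structure DominatingValuation (R : Type*) [CommRing R] [IsDomain R] [IsLocalRing R] where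
  v : AddValuation (FractionRing R) (WithTop ℤ)
  nonneg : ∀ f : R, 0 ≤ v (algebraMap R (FractionRing R) f)
  dominates : ∀ f : R, f ∈ IsLocalRing.maximalIdeal R ↔ 0 < v (algebraMap R (FractionRing R) f)

variable {R : Type*} [CommRing R] [IsDomain R] [IsLocalRing R]

/-- `I(mD) = {g ∈ R ∣ μⱼ(g) ≥ ⌈m αⱼ⌉ for all j}`. -/
def divisorialPiece {s : ℕ} (μ : Fin s → DominatingValuation R) (α : Fin s → ℝ) (m : ℕ) :
    Set R :=
  {g | ∀ j, ((⌈(m : ℝ) * α j⌉ : ℤ) : WithTop ℤ) ≤ (μ j).v (algebraMap R (FractionRing R) g)}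

/-!
If `μⱼ(f) = k < n αⱼ`, then each coefficient satisfies `μⱼ(aᵢ) ≥ ⌈n (d - i) αⱼ⌉ > (d - i) k`,
so every lower term `aᵢ fⁱ` of the integral equation has value strictly larger than
`μⱼ(f^d) = d k`. The leading term then cannot be cancelled, contradicting the equation.
-/

open Finset

theorem AddValuation.pow_add_sum_ne_zero {K Γ : Type*} [CommRing K]
    [LinearOrderedAddCommMonoidWithTop Γ] (v : AddValuation K Γ) {x : K} {d : ℕ} {b : ℕ → K}
    (hx : v (x ^ d) < ⊤) (hlt : ∀ i < d, v (x ^ d) < v (b i * x ^ i)) :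
    x ^ d + ∑ i ∈ range d, b i * x ^ i ≠ 0 := by
  intro h
  have hsum : v (∑ i ∈ range d, b i * x ^ i) = v (x ^ d) := by
    rw [eq_neg_of_add_eq_zero_right h, v.map_neg]
  exact (v.map_lt_sum' hx fun i hi => hlt i (mem_range.mp hi)).ne' hsum

theorem Int.mul_lt_ceil_mul {𝕜 : Type*} [Ring 𝕜] [LinearOrder 𝕜] [IsStrictOrderedRing 𝕜]
    [FloorRing 𝕜] {k : ℤ} {c : 𝕜} (hk : (k : 𝕜) < c) {m : ℕ} (hm : 0 < m) :
    m * k < ⌈(m : 𝕜) * c⌉ := by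
  rw [Int.lt_ceil]
  push_cast
  exact mul_lt_mul_of_pos_left hk (by exact_mod_cast hm)

theorem AddValuation.pow_lt_mul_pow_of_ceil_le {K : Type*} [CommRing K]
    (v : AddValuation K (WithTop ℤ)) {x b : K} {k : ℤ} (hx : v x = k) {c : ℝ}
    (hk : (k : ℝ) < c) {d i : ℕ} (hi : i < d) (hb : (⌈((d - i : ℕ) : ℝ) * c⌉ : WithTop ℤ) ≤ v b) :
    v (x ^ d) < v (b * x ^ i) := by
  have hceil : ((d - i : ℕ) : ℤ) * k < ⌈((d - i : ℕ) : ℝ) * c⌉ :=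
    Int.mul_lt_ceil_mul hk (Nat.sub_pos_of_lt hi)
  have hdk : (d : ℤ) * k < ⌈((d - i : ℕ) : ℝ) * c⌉ + i * k := by
    rw [Nat.cast_sub hi.le] at hceil
    linarith
  rw [v.map_mul, v.map_pow, v.map_pow, hx, ← WithTop.coe_nsmul, ← WithTop.coe_nsmul,
    nsmul_eq_mul, nsmul_eq_mul]
  calc ((d * k : ℤ) : WithTop ℤ)
      < ((⌈((d - i : ℕ) : ℝ) * c⌉ : ℤ) : WithTop ℤ) + ((i * k : ℤ) : WithTop ℤ) := by
        exact_mod_cast hdk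
    _ ≤ v b + ((i * k : ℤ) : WithTop ℤ) := by gcongr

theorem stmt_3_general {s : ℕ} (μ : Fin s → DominatingValuation R) (α : Fin s → ℝ)
    (f : R) (n : ℕ) (d : ℕ) (a : ℕ → R)
    (ha : ∀ i, i < d → a i ∈ divisorialPiece μ α (n * (d - i)))
    (heq : f ^ d + ∑ i ∈ Finset.range d, a i * f ^ i = 0) :
    f ∈ divisorialPiece μ α n := by
  intro j
  set v := (μ j).v
  set F := algebraMap R (FractionRing R)
  by_contra! hlt
  obtain ⟨k, hk⟩ := WithTop.ne_top_iff_exists.mp (hlt.trans (WithTop.coe_lt_top _)).ne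
  have hkα : (k : ℝ) < n * α j := Int.lt_ceil.mp (by rw [← hk] at hlt; exact_mod_cast hlt)
  have hlead : v (F f ^ d) < ⊤ := by
    rw [v.map_pow, ← hk, ← WithTop.coe_nsmul]
    exact WithTop.coe_lt_top _
  have hlower : ∀ i < d, v (F f ^ d) < v ((F ∘ a) i * F f ^ i) := fun i hi => by
    refine v.pow_lt_mul_pow_of_ceil_le hk.symm hkα hi ?_
    rw [show ((d - i : ℕ) : ℝ) * (n * α j) = ((n * (d - i) : ℕ) : ℝ) * α j by push_cast; ring]
    exact ha i hi j
  exact v.pow_add_sum_ne_zero hlead hlower (by simpa using congrArg F heq)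

/-- **(Key step in the integral closedness of divisorial Rees algebras.)**
Suppose `f tⁿ ∈ R[t]` (`n > 0`) satisfies an integral equation over `A = ⊕ₘ I(mD) tᵐ`,
i.e. there is a relation `f^d + a_{d-1} f^{d-1} + ⋯ + a_0 = 0` with `aᵢ ∈ I(n(d-i)D)`.
Then `μⱼ(f) ≥ ⌈n αⱼ⌉` for all `j`, i.e. `f ∈ I(nD)`. -/
theorem stmt_3 {s : ℕ} (μ : Fin s → DominatingValuation R) (α : Fin s → ℝ)
    (hα : ∀ j, 0 < α j)
    (hℕ : ∀ j, ∀ g : R, g ≠ 0 → ∃ k : ℕ, (μ j).v (algebraMap R (FractionRing R) g) = (k : ℤ))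
    (f : R) (n : ℕ) (hn : 0 < n) (d : ℕ) (hd : 0 < d) (a : ℕ → R)
    (ha : ∀ i, i < d → a i ∈ divisorialPiece μ α (n * (d - i)))
    (heq : f ^ d + ∑ i ∈ Finset.range d, a i * f ^ i = 0) :
    f ∈ divisorialPiece μ α n :=
  stmt_3_general μ α f n d a ha heq

end
end

section
/- Let X → Spec(R) be a projective birational morphism with X normal, R a normal excellent local domain, E₁,...,E_r the prime exceptional divisors, and D = Σ a_i E_i an effective real divisor with exceptional support. Define I(mD) = Γ(X, O_X(−⌈Σ m a_i E_i⌉)) = { f ∈ R : ν_{E_i}(f) ≥ ⌈m a_i⌉ for all i } and γ_{E_i}(D) = inf_m ν_{E_i}(I(mD))/m. Then γ_{E_i}(D) ≥ a_i for all i, and for every m ∈ ℕ one has I(mD) = { f ∈ R : ν_{E_i}(f) ≥ ⌈m γ_{E_i}(D)⌉ for all i }. -/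
noncomputable section

/-- An `m_R`-valuation of a local domain `R`; for a normal blowup `X → Spec R` with prime
exceptional divisor `E`, the divisorial valuation `ν_E` with valuation ring `O_{X,E}` is of
this kind. -/
structure MRValuation (R : Type*) [CommRing R] [IsDomain R] [IsLocalRing R] where
  v : AddValuation (FractionRing R) (WithTop ℤ)
  nonneg : ∀ f : R, 0 ≤ v (algebraMap R (FractionRing R) f)
  dominates : ∀ f : R, f ∈ IsLocalRing.maximalIdeal R ↔ 0 < v (algebraMap R (FractionRing R) f)
  surjective : ∀ n : ℤ, ∃ x : FractionRing R, x ≠ 0 ∧ v x = (n : WithTop ℤ)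

variable {R : Type*} [CommRing R] [IsDomain R] [IsLocalRing R]

/-- `I(mD) = Γ(X, O_X(−⌈Σ m aᵢ Eᵢ⌉)) = {f ∈ R ∣ ν_{Eᵢ}(f) ≥ ⌈m aᵢ⌉ for all i}` for the
effective real divisor `D = Σ aᵢ Eᵢ` with exceptional support. -/
def divPiece {r : ℕ} (ν : Fin r → MRValuation R) (a : Fin r → ℝ) (m : ℕ) : Set R :=
  {f | ∀ i, ((⌈(m : ℝ) * a i⌉ : ℤ) : WithTop ℤ) ≤ (ν i).v (algebraMap R (FractionRing R) f)}

/-- **(`γ_{Eᵢ}(D) ≥ aᵢ`, and the filtration of `D` equals the filtration of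
`Σ γ_{Eᵢ}(D) Eᵢ`.)**  Let `R` be a normal excellent local domain (in particular Noetherian
and integrally closed), `ν_{E₁}, …, ν_{E_r}` the divisorial valuations of the prime
exceptional divisors of a normal blowup `X → Spec R`, and `D = Σ aᵢ Eᵢ` an effective real
divisor with exceptional support.  With `τᵢ(m) = min{ν_{Eᵢ}(f) : f ∈ I(mD)}` and
`γ_{Eᵢ}(D) = inf_m τᵢ(m)/m`, we have `γ_{Eᵢ}(D) ≥ aᵢ` for all `i`, and
`I(mD) = {f ∈ R ∣ ν_{Eᵢ}(f) ≥ ⌈m γ_{Eᵢ}(D)⌉ for all i}` for every `m ∈ ℕ`. -/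
theorem stmt_6 [IsNoetherianRing R] [IsIntegrallyClosed R]
    {r : ℕ} (ν : Fin r → MRValuation R) (a : Fin r → ℝ) (ha : ∀ i, 0 ≤ a i)
    (τ : Fin r → ℕ → ℕ)
    (hτ₁ : ∀ i m, ∃ f ∈ divPiece ν a m, f ≠ 0 ∧
      (ν i).v (algebraMap R (FractionRing R) f) = ((τ i m : ℤ) : WithTop ℤ))
    (hτ₂ : ∀ i m, ∀ f ∈ divPiece ν a m, f ≠ 0 →
      ((τ i m : ℤ) : WithTop ℤ) ≤ (ν i).v (algebraMap R (FractionRing R) f))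
    (γ : Fin r → ℝ) (hγ : ∀ i, γ i = ⨅ m : ℕ+, (τ i (m : ℕ) : ℝ) / (m : ℕ)) :
    (∀ i, a i ≤ γ i) ∧
    (∀ m : ℕ, divPiece ν a m =
      {f : R | ∀ i, ((⌈(m : ℝ) * γ i⌉ : ℤ) : WithTop ℤ) ≤
        (ν i).v (algebraMap R (FractionRing R) f)}) := by
  have key : ∀ i (m : ℕ+), a i ≤ (τ i (m : ℕ) : ℝ) / ((m : ℕ) : ℝ) := by
    intro i m
    obtain ⟨f, hf, hf0, hv⟩ := hτ₁ i (m : ℕ)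
    have h1 := hf i
    rw [hv] at h1
    have h2 : (⌈(((m : ℕ) : ℝ)) * a i⌉ : ℤ) ≤ (τ i (m : ℕ) : ℤ) := by exact_mod_cast h1
    have h3 : (((m : ℕ) : ℝ)) * a i ≤ (τ i (m : ℕ) : ℝ) :=
      le_trans (Int.le_ceil _) (by exact_mod_cast h2)
    have hmpos : (0 : ℝ) < ((m : ℕ) : ℝ) := by exact_mod_cast m.pos
    rw [le_div_iff₀ hmpos]
    nlinarith
  have hbdd : ∀ i, BddBelow (Set.range fun m : ℕ+ => (τ i (m : ℕ) : ℝ) / ((m : ℕ) : ℝ)) := by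
    intro i
    exact ⟨a i, by rintro x ⟨m, rfl⟩; exact key i m⟩
  have hag : ∀ i, a i ≤ γ i := fun i => (hγ i) ▸ le_ciInf (key i)
  refine ⟨hag, fun m => ?_⟩
  ext f
  simp only [divPiece, Set.mem_setOf_eq]
  constructor
  · intro hf i
    by_cases hf0 : f = 0
    · subst hf0
      rw [map_zero, (ν i).v.map_zero]
      exact le_top
    · by_cases hm : m = 0
      · subst hm
        have : (⌈((0 : ℕ) : ℝ) * γ i⌉ : ℤ) = 0 := by norm_num
        rw [this]
        exact_mod_cast (ν i).nonneg f
      · set M : ℕ+ := ⟨m, Nat.pos_of_ne_zero hm⟩ with hM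
        have hγle : γ i ≤ (τ i m : ℝ) / ((m : ℕ) : ℝ) := by
          have := ciInf_le (hbdd i) M
          rw [← hγ i] at this
          exact this
        have hmpos : (0 : ℝ) < ((m : ℕ) : ℝ) := by exact_mod_cast Nat.pos_of_ne_zero hm
        have hmul : (m : ℝ) * γ i ≤ (τ i m : ℝ) := by
          rw [le_div_iff₀ hmpos] at hγle
          nlinarith
        have hceil : (⌈(m : ℝ) * γ i⌉ : ℤ) ≤ (τ i m : ℤ) := Int.ceil_le.mpr (by exact_mod_cast hmul)
        calc ((⌈(m : ℝ) * γ i⌉ : ℤ) : WithTop ℤ) ≤ ((τ i m : ℤ) : WithTop ℤ) := by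
              exact_mod_cast hceil
          _ ≤ (ν i).v (algebraMap R (FractionRing R) f) := hτ₂ i m f hf hf0
  · intro hf i
    have h1 : (⌈(m : ℝ) * a i⌉ : ℤ) ≤ (⌈(m : ℝ) * γ i⌉ : ℤ) :=
      Int.ceil_le_ceil (mul_le_mul_of_nonneg_left (hag i) (by positivity))
    exact le_trans (by exact_mod_cast h1) (hf i)

end
end

section
/- Let e₀,...,e_d be positive real numbers satisfying e_i² ≤ e_{i−1} e_{i+1} for 1 ≤ i ≤ d−1. Then e_i^d ≤ e₀^{d−i} e_d^i for 0 ≤ i ≤ d, and Σ_{i=0}^d C(d,i) e_i ≤ (e₀^{1/d} + e_d^{1/d})^d. Moreover, equality holds in e_i^d = e₀^{d−i} e_d^i for all i if and only if e_i² = e_{i−1}e_{i+1} for all 1 ≤ i ≤ d−1, and in that case e_i = e₀^{(d−i)/d} e_d^{i/d} for all i and Σ_i C(d,i) e_i = (e₀^{1/d} + e_d^{1/d})^d. -/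
open Finset Real

private lemma minkq_mono (d : ℕ) (Δ : ℕ → ℝ) (hm : ∀ j, j + 2 ≤ d → Δ j ≤ Δ (j + 1)) :
    ∀ a b, a ≤ b → b + 1 ≤ d → Δ a ≤ Δ b := by
  intro a b hab hbd
  induction b with
  | zero => simp [Nat.le_zero.mp hab]
  | succ n ih =>
    rcases Nat.lt_or_ge a (n + 1) with h | h
    · exact le_trans (ih (Nat.lt_succ_iff.mp h) (by omega)) (hm n (by omega))
    · have : a = n + 1 := le_antisymm hab h
      simp [this]

private lemma minkq_key_sum (d : ℕ) (Δ : ℕ → ℝ) (hm : ∀ j, j + 2 ≤ d → Δ j ≤ Δ (j + 1))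
    (i : ℕ) (hi : i ≤ d) :
    (d : ℝ) * ∑ j ∈ Finset.range i, Δ j ≤ (i : ℝ) * ∑ j ∈ Finset.range d, Δ j := by
  rcases Nat.eq_zero_or_pos i with rfl | hi0
  · simp
  rcases eq_or_lt_of_le hi with rfl | hid
  · rfl
  have hsplit : (∑ j ∈ Finset.range i, Δ j) + ∑ j ∈ Finset.Ico i d, Δ j
      = ∑ j ∈ Finset.range d, Δ j := Finset.sum_range_add_sum_Ico _ hi
  have hA : ∑ j ∈ Finset.range i, Δ j ≤ (i : ℝ) * Δ (i - 1) := by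
    have := Finset.sum_le_card_nsmul (Finset.range i) Δ (Δ (i - 1)) (by
      intro j hj
      simp only [Finset.mem_range] at hj
      exact minkq_mono d Δ hm j (i - 1) (by omega) (by omega))
    simpa [nsmul_eq_mul] using this
  have hB : ((d - i : ℕ) : ℝ) * Δ (i - 1) ≤ ∑ j ∈ Finset.Ico i d, Δ j := by
    have := Finset.card_nsmul_le_sum (Finset.Ico i d) Δ (Δ (i - 1)) (by
      intro j hj
      simp only [Finset.mem_Ico] at hj
      exact minkq_mono d Δ hm (i - 1) j (by omega) (by omega))
    simpa [Nat.card_Ico, nsmul_eq_mul] using this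
  have hc : ((d - i : ℕ) : ℝ) = (d : ℝ) - i := by
    have : (i : ℝ) ≤ d := by exact_mod_cast hi
    push_cast [Nat.cast_sub hi]; ring
  rw [hc] at hB
  have hdi : (0 : ℝ) ≤ (d : ℝ) - i := by
    have : (i : ℝ) ≤ d := by exact_mod_cast hi
    linarith
  have hi0' : (0 : ℝ) ≤ i := by positivity
  nlinarith [mul_le_mul_of_nonneg_left hA hdi, mul_le_mul_of_nonneg_left hB hi0', hsplit]

private lemma minkq_convex (d : ℕ) (f : ℕ → ℝ)
    (h2 : ∀ i, 1 ≤ i → i ≤ d - 1 → 2 * f i ≤ f (i - 1) + f (i + 1))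
    (i : ℕ) (hi : i ≤ d) :
    (d : ℝ) * f i ≤ ((d - i : ℕ) : ℝ) * f 0 + (i : ℝ) * f d := by
  have hm : ∀ j, j + 2 ≤ d → (f (j + 1) - f j) ≤ (f (j + 2) - f (j + 1)) := by
    intro j hj
    have h := h2 (j + 1) (by omega) (by omega)
    have hj1 : (j + 1) - 1 = j := by omega
    rw [hj1] at h
    linarith
  have hk := minkq_key_sum d (fun j => f (j + 1) - f j) (fun j hj => hm j hj) i hi
  have ht : ∀ n, (∑ j ∈ Finset.range n, (f (j + 1) - f j)) = f n - f 0 := fun n =>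
    Finset.sum_range_sub f n
  rw [ht, ht] at hk
  have hc : ((d - i : ℕ) : ℝ) = (d : ℝ) - i := by push_cast [Nat.cast_sub hi]; ring
  rw [hc]
  nlinarith [hk]

private lemma minkq_convex_eq (d : ℕ) (f : ℕ → ℝ)
    (h2 : ∀ i, 1 ≤ i → i ≤ d - 1 → 2 * f i = f (i - 1) + f (i + 1))
    (i : ℕ) (hi : i ≤ d) :
    (d : ℝ) * f i = ((d - i : ℕ) : ℝ) * f 0 + (i : ℝ) * f d := by
  have key : ∀ j, j ≤ d → f j = f 0 + j * (f 1 - f 0) := by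
    intro j
    induction j using Nat.strong_induction_on with
    | _ j ih =>
      match j with
      | 0 => intro _; simp
      | 1 => intro _; push_cast; ring
      | (k + 2) =>
        intro hjd
        have h1 := ih (k + 1) (by omega) (by omega)
        have h0 := ih k (by omega) (by omega)
        have h := h2 (k + 1) (by omega) (by omega)
        have hs : (k + 1) - 1 = k := by omega
        rw [hs] at h
        push_cast at h1 h0 ⊢
        linarith
  have hFi := key i hi
  have hFd := key d le_rfl
  have hc : ((d - i : ℕ) : ℝ) = (d : ℝ) - i := by push_cast [Nat.cast_sub hi]; ring
  rw [hc, hFi, hFd]; ring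

/-- **(Numerical Minkowski inequalities and the equality case.)**
Let `e₀, …, e_d` be positive reals with `eᵢ² ≤ e_{i−1} e_{i+1}` for `1 ≤ i ≤ d−1`.  Then
`eᵢ^d ≤ e₀^{d−i} e_d^i` for `0 ≤ i ≤ d` and `Σᵢ C(d,i) eᵢ ≤ (e₀^{1/d} + e_d^{1/d})^d`.
Moreover `eᵢ^d = e₀^{d−i} e_d^i` for all `i` iff `eᵢ² = e_{i−1} e_{i+1}` for all
`1 ≤ i ≤ d−1`, and in that case `eᵢ = e₀^{(d−i)/d} e_d^{i/d}` for all `i` and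
`Σᵢ C(d,i) eᵢ = (e₀^{1/d} + e_d^{1/d})^d`. -/
theorem stmt_10 (d : ℕ) (hd : 0 < d) (e : ℕ → ℝ) (hpos : ∀ i, i ≤ d → 0 < e i)
    (hlog : ∀ i, 1 ≤ i → i ≤ d - 1 → e i ^ 2 ≤ e (i - 1) * e (i + 1)) :
    (∀ i, i ≤ d → e i ^ d ≤ e 0 ^ (d - i) * e d ^ i) ∧
    (∑ i ∈ Finset.range (d + 1), (d.choose i : ℝ) * e i ≤
      (e 0 ^ ((1 : ℝ) / d) + e d ^ ((1 : ℝ) / d)) ^ d) ∧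
    ((∀ i, i ≤ d → e i ^ d = e 0 ^ (d - i) * e d ^ i) ↔
      (∀ i, 1 ≤ i → i ≤ d - 1 → e i ^ 2 = e (i - 1) * e (i + 1))) ∧
    ((∀ i, 1 ≤ i → i ≤ d - 1 → e i ^ 2 = e (i - 1) * e (i + 1)) →
      (∀ i, i ≤ d → e i = e 0 ^ (((d : ℝ) - i) / d) * e d ^ ((i : ℝ) / d)) ∧
      ∑ i ∈ Finset.range (d + 1), (d.choose i : ℝ) * e i =
        (e 0 ^ ((1 : ℝ) / d) + e d ^ ((1 : ℝ) / d)) ^ d) := by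
  set f : ℕ → ℝ := fun i => Real.log (e i) with hf
  have hef : ∀ i, i ≤ d → Real.exp (f i) = e i := fun i hi => Real.exp_log (hpos i hi)
  have hdR : (0 : ℝ) < d := by exact_mod_cast hd
  -- exp conversions
  have hexpL : ∀ i, i ≤ d → Real.exp ((d : ℝ) * f i) = e i ^ d := by
    intro i hi
    rw [Real.exp_nat_mul, hef i hi]
  have hexpR : ∀ i, i ≤ d →
      Real.exp (((d - i : ℕ) : ℝ) * f 0 + (i : ℝ) * f d) = e 0 ^ (d - i) * e d ^ i := by
    intro i hi
    rw [Real.exp_add, Real.exp_nat_mul, Real.exp_nat_mul, hef 0 (by omega), hef d le_rfl]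
  -- log-concavity in additive form
  have h2 : ∀ i, 1 ≤ i → i ≤ d - 1 → 2 * f i ≤ f (i - 1) + f (i + 1) := by
    intro i h1 h2'
    have hle := hlog i h1 h2'
    have hi1 : i - 1 ≤ d := by omega
    have hi2 : i + 1 ≤ d := by omega
    have := Real.log_le_log (pow_pos (hpos i (by omega)) 2) hle
    rw [Real.log_pow, Real.log_mul (ne_of_gt (hpos _ hi1)) (ne_of_gt (hpos _ hi2))] at this
    push_cast at this
    simpa [hf] using this
  -- part 1
  have part1 : ∀ i, i ≤ d → e i ^ d ≤ e 0 ^ (d - i) * e d ^ i := by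
    intro i hi
    rw [← hexpL i hi, ← hexpR i hi]
    exact Real.exp_le_exp.mpr (minkq_convex d f h2 i hi)
  -- a, b and pointwise bound
  set a : ℝ := e 0 ^ ((1 : ℝ) / d) with ha
  set b : ℝ := e d ^ ((1 : ℝ) / d) with hb
  have haexp : a = Real.exp (f 0 * ((1 : ℝ) / d)) := by
    rw [ha, Real.rpow_def_of_pos (hpos 0 (by omega))]
  have hbexp : b = Real.exp (f d * ((1 : ℝ) / d)) := by
    rw [hb, Real.rpow_def_of_pos (hpos d le_rfl)]
  have habi : ∀ i, i ≤ d →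
      a ^ (d - i) * b ^ i = Real.exp ((((d - i : ℕ) : ℝ) * f 0 + (i : ℝ) * f d) / d) := by
    intro i hi
    rw [haexp, hbexp, ← Real.exp_nat_mul, ← Real.exp_nat_mul, ← Real.exp_add]
    congr 1
    field_simp
    try ring
  have hpt : ∀ i, i ≤ d → e i ≤ a ^ (d - i) * b ^ i := by
    intro i hi
    rw [← hef i hi, habi i hi]
    apply Real.exp_le_exp.mpr
    have h := minkq_convex d f h2 i hi
    rw [le_div_iff₀ hdR]
    linarith
  -- part 2
  have hsum_rhs : (a + b) ^ d = ∑ i ∈ Finset.range (d + 1), b ^ i * a ^ (d - i) * (d.choose i : ℝ) := by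
    rw [add_comm a b]
    exact (Commute.all b a).add_pow d
  have part2 : ∑ i ∈ Finset.range (d + 1), (d.choose i : ℝ) * e i ≤ (a + b) ^ d := by
    rw [hsum_rhs]
    apply Finset.sum_le_sum
    intro i hi
    have hi' : i ≤ d := by simpa [Nat.lt_succ_iff] using Finset.mem_range.mp hi
    have := hpt i hi'
    have hc : (0 : ℝ) ≤ (d.choose i : ℝ) := by positivity
    calc (d.choose i : ℝ) * e i ≤ (d.choose i : ℝ) * (a ^ (d - i) * b ^ i) :=
          mul_le_mul_of_nonneg_left this hc
      _ = b ^ i * a ^ (d - i) * (d.choose i : ℝ) := by ring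
  -- iff
  have part3 : (∀ i, i ≤ d → e i ^ d = e 0 ^ (d - i) * e d ^ i) ↔
      (∀ i, 1 ≤ i → i ≤ d - 1 → e i ^ 2 = e (i - 1) * e (i + 1)) := by
    constructor
    · intro heq i h1 h2'
      have hlin : ∀ j, j ≤ d → (d : ℝ) * f j = ((d - j : ℕ) : ℝ) * f 0 + (j : ℝ) * f d := by
        intro j hj
        have : Real.exp ((d : ℝ) * f j)
            = Real.exp (((d - j : ℕ) : ℝ) * f 0 + (j : ℝ) * f d) := by
          rw [hexpL j hj, hexpR j hj]; exact heq j hj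
        exact Real.exp_eq_exp.mp this
      have e1 := hlin (i - 1) (by omega)
      have e2 := hlin i (by omega)
      have e3 := hlin (i + 1) (by omega)
      have c1 : ((d - (i - 1) : ℕ) : ℝ) = (d : ℝ) - i + 1 := by
        have h' : d - (i - 1) = d - i + 1 := by omega
        rw [h']
        push_cast [Nat.cast_sub (by omega : i ≤ d)]
        ring
      have c2 : ((d - i : ℕ) : ℝ) = (d : ℝ) - i := by
        push_cast [Nat.cast_sub (by omega : i ≤ d)]; ring
      have c3 : ((d - (i + 1) : ℕ) : ℝ) = (d : ℝ) - i - 1 := by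
        push_cast [Nat.cast_sub (by omega : i + 1 ≤ d)]; ring
      have c4 : ((i - 1 : ℕ) : ℝ) = (i : ℝ) - 1 := by
        push_cast [Nat.cast_sub (by omega : 1 ≤ i)]; ring
      rw [c1, c4] at e1
      rw [c2] at e2
      rw [c3] at e3
      push_cast at e3
      have h2f : 2 * f i = f (i - 1) + f (i + 1) := by
        have hmul : (d : ℝ) * (2 * f i) = (d : ℝ) * (f (i - 1) + f (i + 1)) := by linarith [e1, e2, e3]
        exact mul_left_cancel₀ (ne_of_gt hdR) hmul
      have : Real.exp (2 * f i) = Real.exp (f (i - 1) + f (i + 1)) := by rw [h2f]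
      rw [Real.exp_add, hef (i - 1) (by omega), hef (i + 1) (by omega)] at this
      calc e i ^ 2 = Real.exp (f i) ^ 2 := by rw [hef i (by omega)]
        _ = Real.exp (2 * f i) := by
            rw [show (2 : ℝ) * f i = ((2 : ℕ) : ℝ) * f i by norm_num, Real.exp_nat_mul]
        _ = e (i - 1) * e (i + 1) := this
    · intro heq i hi
      have h2e : ∀ j, 1 ≤ j → j ≤ d - 1 → 2 * f j = f (j - 1) + f (j + 1) := by
        intro j h1 h2'
        have hj1 : j - 1 ≤ d := by omega
        have hj2 : j + 1 ≤ d := by omega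
        have := congrArg Real.log (heq j h1 h2')
        rw [Real.log_pow, Real.log_mul (ne_of_gt (hpos _ hj1)) (ne_of_gt (hpos _ hj2))] at this
        push_cast at this
        simpa [hf] using this
      have := minkq_convex_eq d f h2e i hi
      rw [← hexpL i hi, ← hexpR i hi, this]
  -- part 4
  refine ⟨part1, part2, part3, ?_⟩
  intro heq
  have h2e : ∀ j, 1 ≤ j → j ≤ d - 1 → 2 * f j = f (j - 1) + f (j + 1) := by
    intro j h1 h2'
    have hj1 : j - 1 ≤ d := by omega
    have hj2 : j + 1 ≤ d := by omega
    have := congrArg Real.log (heq j h1 h2')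
    rw [Real.log_pow, Real.log_mul (ne_of_gt (hpos _ hj1)) (ne_of_gt (hpos _ hj2))] at this
    push_cast at this
    simpa [hf] using this
  have hlin : ∀ j, j ≤ d → (d : ℝ) * f j = ((d - j : ℕ) : ℝ) * f 0 + (j : ℝ) * f d :=
    minkq_convex_eq d f h2e
  have hptEq : ∀ i, i ≤ d → e i = a ^ (d - i) * b ^ i := by
    intro i hi
    rw [← hef i hi, habi i hi]
    congr 1
    rw [eq_div_iff (ne_of_gt hdR)]
    linarith [hlin i hi]
  constructor
  · intro i hi
    have c2 : ((d - i : ℕ) : ℝ) = (d : ℝ) - i := by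
      push_cast [Nat.cast_sub hi]; ring
    have hrw : e 0 ^ (((d : ℝ) - i) / d) * e d ^ ((i : ℝ) / d)
        = Real.exp ((((d - i : ℕ) : ℝ) * f 0 + (i : ℝ) * f d) / d) := by
      rw [Real.rpow_def_of_pos (hpos 0 (by omega)), Real.rpow_def_of_pos (hpos d le_rfl),
        ← Real.exp_add, c2]
      congr 1
      field_simp
      try ring
    rw [hrw, ← hef i hi]
    congr 1
    rw [eq_div_iff (ne_of_gt hdR)]
    linarith [hlin i hi]
  · rw [hsum_rhs]
    apply Finset.sum_congr rfl
    intro i hi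
    have hi' : i ≤ d := by simpa [Nat.lt_succ_iff] using Finset.mem_range.mp hi
    rw [hptEq i hi']
    ring
end

section
/- Let R be an analytically irreducible local domain with completion R̂, let μ₁,...,μ_s be m_R-valuations with unique extensions μ̂₁,...,μ̂_s to m_{R̂}-valuations of R̂, and let n₁,...,n_s be positive integers. Then (I(μ₁)_{n₁} ∩ ... ∩ I(μ_s)_{n_s}) R̂ = I(μ̂₁)_{n₁} ∩ ... ∩ I(μ̂_s)_{n_s}, and (I(μ̂₁)_{n₁} ∩ ... ∩ I(μ̂_s)_{n_s}) ∩ R = I(μ₁)_{n₁} ∩ ... ∩ I(μ_s)_{n_s}. -/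
/-!
Contraction is immediate because each `μ̂ⱼ` restricts to `μⱼ` on `R`. For extension, the
intersection of the `I(μ̂ⱼ)_{nⱼ}` contains some `m_{R̂}^a = m_R^a R̂`, and every element of `R̂`
is congruent to an element of `R` modulo `m_R^a R̂`; an ideal of `R̂` containing `m_R^a R̂` is
therefore generated by its contraction to `R`.
-/

open IsLocalRing

theorem Ideal.exists_pow_le_iInf {R ι : Type*} [CommSemiring R] [Finite ι] {I : Ideal R}
    {J : ι → Ideal R} (h : ∀ i, ∃ a, I ^ a ≤ J i) : ∃ a, I ^ a ≤ ⨅ i, J i := by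
  choose a ha using h
  obtain ⟨b, hb⟩ := Finite.exists_le a
  exact ⟨b, le_iInf fun i ↦ (Ideal.pow_le_pow_right (hb i)).trans (ha i)⟩

theorem Ideal.map_comap_eq_of_forall_exists_sub_mem {R S : Type*} [CommRing R] [CommRing S]
    {f : R →+* S} {K : Ideal R} {J : Ideal S} (hKJ : K.map f ≤ J)
    (h : ∀ x, ∃ r, x - f r ∈ K.map f) : (J.comap f).map f = J := by
  refine le_antisymm Ideal.map_comap_le fun x hx ↦ ?_
  obtain ⟨r, hr⟩ := h x
  have hr' : r ∈ J.comap f := by simpa using J.sub_mem hx (hKJ hr)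
  have hK : K ≤ J.comap f := Ideal.map_le_iff_le_comap.mp hKJ
  simpa using add_mem (Ideal.mem_map_of_mem f hr') (Ideal.map_mono hK hr)

namespace AdicCompletion

variable {R : Type*} [CommRing R] {I : Ideal R}

theorem mem_map_pow_iff_val_eq_zero (hI : I.FG) (a : ℕ) (x : AdicCompletion I R) :
    x ∈ (I ^ a).map (algebraMap R (AdicCompletion I R)) ↔ x.val a = 0 := by
  rw [← Submodule.restrictScalars_mem R, ← Ideal.smul_top_eq_map, pow_smul_top_eq_ker_eval hI]
  simp [eval]

theorem exists_sub_algebraMap_mem_map_pow (hI : I.FG) (a : ℕ) (x : AdicCompletion I R) :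
    ∃ r, x - algebraMap R (AdicCompletion I R) r ∈ (I ^ a).map (algebraMap R _) := by
  obtain ⟨r, hr⟩ := Submodule.Quotient.mk_surjective _ (x.val a)
  refine ⟨r, (mem_map_pow_iff_val_eq_zero hI a _).mpr ?_⟩
  rw [val_sub_apply, algebraMap_apply, Algebra.algebraMap_self, RingHom.id_apply, of_apply,
    Submodule.mkQ_apply, hr, sub_self]

theorem map_comap_eq_of_map_pow_le (hI : I.FG) {a : ℕ} {J : Ideal (AdicCompletion I R)}
    (hJ : (I ^ a).map (algebraMap R _) ≤ J) :
    (J.comap (algebraMap R _)).map (algebraMap R _) = J :=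
  Ideal.map_comap_eq_of_forall_exists_sub_mem hJ (exists_sub_algebraMap_mem_map_pow hI a)

end AdicCompletion

theorem stmt_13_general {R : Type*} [CommRing R] [IsLocalRing R] [IsNoetherianRing R]
    (s : ℕ) (v : Fin s → AddValuation R (WithTop ℤ))
    (vhat : Fin s → AddValuation (AdicCompletion (maximalIdeal R) R) (WithTop ℤ))
    (hext : ∀ j, ∀ f : R,
      vhat j (algebraMap R (AdicCompletion (maximalIdeal R) R) f) = v j f)
    (J : Fin s → ℕ → Ideal R)
    (hJ : ∀ j m, ∀ f : R, f ∈ J j m ↔ ((m : ℤ) : WithTop ℤ) ≤ v j f)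
    (Jhat : Fin s → ℕ → Ideal (AdicCompletion (maximalIdeal R) R))
    (hJhat : ∀ j m, ∀ x : AdicCompletion (maximalIdeal R) R,
      x ∈ Jhat j m ↔ ((m : ℤ) : WithTop ℤ) ≤ vhat j x)
    (hprimary : ∀ j m, ∃ a : ℕ,
      (maximalIdeal (AdicCompletion (maximalIdeal R) R)) ^ a ≤ Jhat j m)
    (n : Fin s → ℕ) :
    Ideal.map (algebraMap R (AdicCompletion (maximalIdeal R) R)) (⨅ j, J j (n j)) =
      (⨅ j, Jhat j (n j)) ∧
    Ideal.comap (algebraMap R (AdicCompletion (maximalIdeal R) R)) (⨅ j, Jhat j (n j)) =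
      (⨅ j, J j (n j)) := by
  have hcomap : (⨅ j, Jhat j (n j)).comap (algebraMap R _) = ⨅ j, J j (n j) := by
    ext f
    simp only [Ideal.mem_comap, Ideal.mem_iInf, hJhat, hJ, hext]
  obtain ⟨a, ha⟩ := Ideal.exists_pow_le_iInf fun j ↦ hprimary j (n j)
  rw [AdicCompletion.maximalIdeal_eq_map, ← Ideal.map_pow] at ha
  refine ⟨?_, hcomap⟩
  rw [← hcomap]
  exact AdicCompletion.map_comap_eq_of_map_pow_le (maximalIdeal R).fg_of_isNoetherianRing ha

/-- **(Valuation ideals behave well under completion for analytically irreducible local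
domains.)**  Let `R` be an analytically irreducible Noetherian local domain with `m_R`-adic
completion `R̂`, let `μ₁, …, μ_s` be `m_R`-valuations with unique extensions
`μ̂₁, …, μ̂_s` to `m_{R̂}`-valuations of `R̂` (so each valuation ideal of `μ̂ⱼ` contains a
power of `m_{R̂}`), and let `n₁, …, n_s` be positive integers.  Then
`(I(μ₁)_{n₁} ∩ ⋯ ∩ I(μ_s)_{n_s}) R̂ = I(μ̂₁)_{n₁} ∩ ⋯ ∩ I(μ̂_s)_{n_s}` and
`(I(μ̂₁)_{n₁} ∩ ⋯ ∩ I(μ̂_s)_{n_s}) ∩ R = I(μ₁)_{n₁} ∩ ⋯ ∩ I(μ_s)_{n_s}`. -/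
theorem stmt_13 {R : Type*} [CommRing R] [IsDomain R] [IsLocalRing R] [IsNoetherianRing R]
    [IsDomain (AdicCompletion (maximalIdeal R) R)]
    [IsLocalRing (AdicCompletion (maximalIdeal R) R)]
    (s : ℕ) (v : Fin s → AddValuation R (WithTop ℤ))
    (vhat : Fin s → AddValuation (AdicCompletion (maximalIdeal R) R) (WithTop ℤ))
    (hext : ∀ j, ∀ f : R,
      vhat j (algebraMap R (AdicCompletion (maximalIdeal R) R) f) = v j f)
    (hnonneg : ∀ j, ∀ x : AdicCompletion (maximalIdeal R) R, 0 ≤ vhat j x)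
    (J : Fin s → ℕ → Ideal R)
    (hJ : ∀ j m, ∀ f : R, f ∈ J j m ↔ ((m : ℤ) : WithTop ℤ) ≤ v j f)
    (Jhat : Fin s → ℕ → Ideal (AdicCompletion (maximalIdeal R) R))
    (hJhat : ∀ j m, ∀ x : AdicCompletion (maximalIdeal R) R,
      x ∈ Jhat j m ↔ ((m : ℤ) : WithTop ℤ) ≤ vhat j x)
    (hprimary : ∀ j m, ∃ a : ℕ,
      (maximalIdeal (AdicCompletion (maximalIdeal R) R)) ^ a ≤ Jhat j m)
    (n : Fin s → ℕ) (hn : ∀ j, 0 < n j) :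
    Ideal.map (algebraMap R (AdicCompletion (maximalIdeal R) R)) (⨅ j, J j (n j)) =
      (⨅ j, Jhat j (n j)) ∧
    Ideal.comap (algebraMap R (AdicCompletion (maximalIdeal R) R)) (⨅ j, Jhat j (n j)) =
      (⨅ j, J j (n j)) :=
  stmt_13_general s v vhat hext J hJ Jhat hJhat hprimary n
end

section
/- Let R be a normal excellent local domain and suppose ν₁ and ν₂ are m_R-valuations such that there exist relatively prime positive integers a, b with I(ν₁)_{an} = I(ν₂)_{bn} for all n ∈ ℕ. Then a = b = 1 and ν₁ = ν₂. -/
noncomputable section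

variable {R : Type*} [CommRing R] [IsDomain R] [IsLocalRing R]

/-- The valuation ideal `I(ν)ₙ = {f ∈ R ∣ ν(f) ≥ n}`, as a subset of `R`. -/
def MRValuation.piece (ν : MRValuation R) (n : ℕ) : Set R :=
  {f | (n : WithTop ℤ) ≤ ν.v (algebraMap R (FractionRing R) f)}

namespace MRValuationAux

/-- For nonzero `f : R` the valuation is a nonnegative integer. -/
lemma exists_int (ν : MRValuation R) {f : R} (hf : f ≠ 0) :
    ∃ m : ℤ, 0 ≤ m ∧ ν.v (algebraMap R (FractionRing R) f) = (m : WithTop ℤ) := by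
  have hne : algebraMap R (FractionRing R) f ≠ 0 :=
    (map_ne_zero_iff _ (IsFractionRing.injective R (FractionRing R))).mpr hf
  have htop : ν.v (algebraMap R (FractionRing R) f) ≠ ⊤ := ν.v.ne_top_iff.mpr hne
  obtain ⟨m, hm⟩ := WithTop.ne_top_iff_exists.mp htop
  refine ⟨m, ?_, hm.symm⟩
  have := ν.nonneg f
  rw [← hm] at this
  exact_mod_cast this

/-- The proportionality `b * ν₁(f) = a * ν₂(f)` for nonzero `f ∈ R`. -/
lemma ratio (ν₁ ν₂ : MRValuation R) (a b : ℕ) (hA : 0 < a) (hB : 0 < b)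
    (heq : ∀ n : ℕ, ν₁.piece (a * n) = ν₂.piece (b * n))
    {f : R} (hf : f ≠ 0) {m k : ℤ}
    (hm : ν₁.v (algebraMap R (FractionRing R) f) = (m : WithTop ℤ))
    (hk : ν₂.v (algebraMap R (FractionRing R) f) = (k : WithTop ℤ)) :
    (b : ℤ) * m = (a : ℤ) * k := by
  have hm0 : 0 ≤ m := by
    have := ν₁.nonneg f; rw [hm] at this; exact_mod_cast this
  have hk0 : 0 ≤ k := by
    have := ν₂.nonneg f; rw [hk] at this; exact_mod_cast this
  have H : ∀ n N : ℕ, ((a : ℤ) * n ≤ N * m ↔ (b : ℤ) * n ≤ N * k) := by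
    intro n N
    have h := Set.ext_iff.mp (heq n) (f ^ N)
    simp only [MRValuation.piece, Set.mem_setOf_eq, map_pow, AddValuation.map_pow,
      hm, hk] at h
    rw [← WithTop.coe_nsmul, ← WithTop.coe_nsmul] at h
    have c1 : ((a * n : ℕ) : WithTop ℤ) = (((a * n : ℕ) : ℤ) : WithTop ℤ) := by
      push_cast; rfl
    have c2 : ((b * n : ℕ) : WithTop ℤ) = (((b * n : ℕ) : ℤ) : WithTop ℤ) := by
      push_cast; rfl
    rw [c1, c2, WithTop.coe_le_coe, WithTop.coe_le_coe] at h
    simpa [smul_eq_mul, Nat.cast_mul] using h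
  have h1 : (b : ℤ) * m ≤ (a : ℤ) * k := by
    rcases Int.eq_ofNat_of_zero_le hm0 with ⟨m', rfl⟩
    have := (H m' a).mp (by push_cast; ring_nf; exact le_refl _)
    linarith [this]
  have h2 : (a : ℤ) * k ≤ (b : ℤ) * m := by
    rcases Int.eq_ofNat_of_zero_le hk0 with ⟨k', rfl⟩
    have := (H k' b).mpr (by push_cast; ring_nf; exact le_refl _)
    linarith [this]
  exact le_antisymm h1 h2

/-- `a` divides `ν₁(x)` for every nonzero `x` in the fraction field. -/
lemma a_dvd (ν₁ ν₂ : MRValuation R) (a b : ℕ) (hA : 0 < a) (hB : 0 < b)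
    (hcop : Nat.Coprime a b)
    (heq : ∀ n : ℕ, ν₁.piece (a * n) = ν₂.piece (b * n))
    {x : FractionRing R} (hx : x ≠ 0) {c : ℤ} (hc : ν₁.v x = (c : WithTop ℤ)) :
    (a : ℤ) ∣ c := by
  obtain ⟨p, q, hq, rfl⟩ := IsFractionRing.div_surjective (A := R) x
  have hq0 : q ≠ 0 := nonZeroDivisors.ne_zero hq
  have hp0 : p ≠ 0 := by
    rintro rfl; simp at hx
  -- a ∣ ν₁ of any nonzero element of R
  have key : ∀ g : R, g ≠ 0 → ∀ d : ℤ,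
      ν₁.v (algebraMap R (FractionRing R) g) = (d : WithTop ℤ) → (a : ℤ) ∣ d := by
    intro g hg d hd
    obtain ⟨k, hk0, hk⟩ := exists_int ν₂ hg
    have := ratio ν₁ ν₂ a b hA hB heq hg hd hk
    have hdvd : (a : ℤ) ∣ (b : ℤ) * d := ⟨k, by linarith [this]⟩
    have hcop' : IsCoprime (a : ℤ) (b : ℤ) := Int.isCoprime_iff_gcd_eq_one.mpr (by
      simpa [Int.gcd] using hcop)
    exact hcop'.dvd_of_dvd_mul_left hdvd
  obtain ⟨mp, _, hmp⟩ := exists_int ν₁ hp0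
  obtain ⟨mq, _, hmq⟩ := exists_int ν₁ hq0
  have hvq : ν₁.v (algebraMap R (FractionRing R) q) ≠ ⊤ := by rw [hmq]; exact WithTop.coe_ne_top
  have hdiv : ν₁.v (algebraMap R (FractionRing R) p / algebraMap R (FractionRing R) q)
      = ((mp - mq : ℤ) : WithTop ℤ) := by
    rw [AddValuation.map_div, hmp, hmq]
    exact_mod_cast rfl
  rw [hc] at hdiv
  have : c = mp - mq := by exact_mod_cast hdiv
  subst this
  exact dvd_sub (key p hp0 mp hmp) (key q hq0 mq hmq)

/-- Surjectivity forces `a = 1`. -/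
lemma a_eq_one (ν₁ ν₂ : MRValuation R) (a b : ℕ) (hA : 0 < a) (hB : 0 < b)
    (hcop : Nat.Coprime a b)
    (heq : ∀ n : ℕ, ν₁.piece (a * n) = ν₂.piece (b * n)) : a = 1 := by
  obtain ⟨x, hx, hvx⟩ := ν₁.surjective 1
  have := a_dvd ν₁ ν₂ a b hA hB hcop heq hx hvx
  have : (a : ℤ) ∣ 1 := this
  have ha1 : a ∣ 1 := by exact_mod_cast this
  exact Nat.dvd_one.mp ha1

end MRValuationAux

/-- **(Two `m_R`-valuations with proportional filtrations of valuation ideals are equal.)**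
Let `R` be a normal excellent local domain (in particular Noetherian and integrally closed),
and `ν₁, ν₂` `m_R`-valuations such that for some relatively prime positive integers `a, b`
one has `I(ν₁)_{an} = I(ν₂)_{bn}` for all `n ∈ ℕ`.  Then `a = b = 1` and `ν₁ = ν₂`. -/
theorem stmt_14 [IsNoetherianRing R] [IsIntegrallyClosed R]
    (ν₁ ν₂ : MRValuation R) (a b : ℕ) (hA : 0 < a) (hB : 0 < b)
    (hcop : Nat.Coprime a b)
    (heq : ∀ n : ℕ, ν₁.piece (a * n) = ν₂.piece (b * n)) :
    a = 1 ∧ b = 1 ∧ ν₁ = ν₂ := by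
  have ha : a = 1 := MRValuationAux.a_eq_one ν₁ ν₂ a b hA hB hcop heq
  have hb : b = 1 := MRValuationAux.a_eq_one ν₂ ν₁ b a hB hA hcop.symm
    (fun n => (heq n).symm)
  subst ha; subst hb
  refine ⟨rfl, rfl, ?_⟩
  -- now show ν₁ = ν₂
  have hvR : ∀ g : R, ν₁.v (algebraMap R (FractionRing R) g)
      = ν₂.v (algebraMap R (FractionRing R) g) := by
    intro g
    by_cases hg : g = 0
    · subst hg; simp
    · obtain ⟨m, _, hm⟩ := MRValuationAux.exists_int ν₁ hg
      obtain ⟨k, _, hk⟩ := MRValuationAux.exists_int ν₂ hg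
      have := MRValuationAux.ratio ν₁ ν₂ 1 1 hA hB heq hg hm hk
      simp only [Nat.cast_one, one_mul] at this
      rw [hm, hk, this]
  have hv : ν₁.v = ν₂.v := by
    apply AddValuation.ext
    intro x
    obtain ⟨p, q, hq, rfl⟩ := IsFractionRing.div_surjective (A := R) x
    rw [AddValuation.map_div, AddValuation.map_div, hvR, hvR]
  cases ν₁; cases ν₂
  simp_all


end
end

section
/- Let Γ ⊆ ℕ^{d+1} be the semigroup Γ(n₁,n₂) of a product filtration and Δ(m₁,m₂) ⊂ ℝ^d its level-1 convex bodies (closure of { (a₁/i,...,a_d/i) : (a,i) ∈ Γ(m₁,m₂), i > 0 }). Then for all m₁,m₂,n₁,n₂ ∈ ℕ, the Minkowski sum satisfies Δ(m₁,m₂) + Δ(n₁,n₂) ⊆ Δ(m₁+n₁, m₂+n₂); in particular n₁Δ(1,0) + n₂Δ(0,1) ⊆ Δ(n₁,n₂). -/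
/-! If `ν(f)/i ∈ Δ(m₁,m₂)` and `ν(g)/j ∈ Δ(n₁,n₂)` come from `f ∈ I(1)_{im₁} I(2)_{im₂}` and
`g ∈ I(1)_{jn₁} I(2)_{jn₂}`, then `f^j g^i ∈ I(1)_{ij(m₁+n₁)} I(2)_{ij(m₂+n₂)}` and
`ν(f^j g^i)/(ij) = ν(f)/i + ν(g)/j`; so the generating point sets are superadditive, and this
passes to their closures by continuity of addition. In the same way `f^n` gives
`n • Δ(a,b) ⊆ Δ(na,nb)`, and the second claim is superadditivity applied to
`n₁ • Δ(1,0) ⊆ Δ(n₁,0)` and `n₂ • Δ(0,1) ⊆ Δ(0,n₂)`. -/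

open Pointwise

noncomputable section

variable {R : Type*} [CommRing R] [IsDomain R]

/-- The level-1 convex body `Δ(n₁,n₂)` of the semigroup
`Γ(n₁,n₂) = {(ν(f), i) : f ∈ I(1)_{in₁} I(2)_{in₂}}`: the closure of
`{ν(f)/i : f ∈ I(1)_{i n₁} I(2)_{i n₂}, f ≠ 0, i > 0}` in `ℝ^d`. -/
def Δ (d : ℕ) (ν : R → (Fin d → ℤ)) (I₁ I₂ : ℕ → Ideal R) (n₁ n₂ : ℕ) :
    Set (Fin d → ℝ) :=
  closure {x | ∃ i : ℕ, 0 < i ∧ ∃ f : R, f ≠ 0 ∧ f ∈ I₁ (i * n₁) * I₂ (i * n₂) ∧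
    x = fun k => (ν f k : ℝ) / (i : ℝ)}

theorem Ideal.pow_le_of_mul_le_add {S : Type*} [CommSemiring S] (I : ℕ → Ideal S)
    (h0 : I 0 = ⊤) (hmul : ∀ a b, I a * I b ≤ I (a + b)) (a n : ℕ) : I a ^ n ≤ I (n * a) := by
  induction n with
  | zero => simp [h0]
  | succ n ih =>
    calc I a ^ (n + 1) = I a ^ n * I a := pow_succ _ _
      _ ≤ I (n * a) * I a := Ideal.mul_mono_left ih
      _ ≤ I (n * a + a) := hmul _ _
      _ = I ((n + 1) * a) := by rw [add_one_mul]

section ProductFiltration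

variable {S : Type*} [CommSemiring S] {I₁ I₂ : ℕ → Ideal S}

theorem mul_mem_mul_filtration (hmul₁ : ∀ a b, I₁ a * I₁ b ≤ I₁ (a + b))
    (hmul₂ : ∀ a b, I₂ a * I₂ b ≤ I₂ (a + b)) {f g : S} {a₁ a₂ b₁ b₂ : ℕ}
    (hf : f ∈ I₁ a₁ * I₂ a₂) (hg : g ∈ I₁ b₁ * I₂ b₂) :
    f * g ∈ I₁ (a₁ + b₁) * I₂ (a₂ + b₂) := by
  have hle : I₁ a₁ * I₂ a₂ * (I₁ b₁ * I₂ b₂) ≤ I₁ (a₁ + b₁) * I₂ (a₂ + b₂) :=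
    calc I₁ a₁ * I₂ a₂ * (I₁ b₁ * I₂ b₂) = I₁ a₁ * I₁ b₁ * (I₂ a₂ * I₂ b₂) := by ring
      _ ≤ I₁ (a₁ + b₁) * I₂ (a₂ + b₂) := Ideal.mul_mono (hmul₁ _ _) (hmul₂ _ _)
  exact hle (Ideal.mul_mem_mul hf hg)

theorem pow_mem_mul_filtration (h0₁ : I₁ 0 = ⊤) (h0₂ : I₂ 0 = ⊤)
    (hmul₁ : ∀ a b, I₁ a * I₁ b ≤ I₁ (a + b)) (hmul₂ : ∀ a b, I₂ a * I₂ b ≤ I₂ (a + b))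
    {f : S} {a₁ a₂ : ℕ} (hf : f ∈ I₁ a₁ * I₂ a₂) (n : ℕ) :
    f ^ n ∈ I₁ (n * a₁) * I₂ (n * a₂) := by
  have hle : (I₁ a₁ * I₂ a₂) ^ n ≤ I₁ (n * a₁) * I₂ (n * a₂) := by
    rw [mul_pow]
    exact Ideal.mul_mono (Ideal.pow_le_of_mul_le_add I₁ h0₁ hmul₁ a₁ n)
      (Ideal.pow_le_of_mul_le_add I₂ h0₂ hmul₂ a₂ n)
  exact hle (Ideal.pow_mem_pow hf n)

end ProductFiltration

section MulToAdd

variable {M₀ G : Type*} [MonoidWithZero M₀] [Nontrivial M₀] [AddLeftCancelMonoid G] {ν : M₀ → G}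

theorem map_one_of_map_mul (hν : ∀ f g : M₀, f ≠ 0 → g ≠ 0 → ν (f * g) = ν f + ν g) :
    ν 1 = 0 := by
  have h := hν 1 1 one_ne_zero one_ne_zero
  rw [mul_one] at h
  exact left_eq_add.mp h

theorem map_pow_of_map_mul [NoZeroDivisors M₀]
    (hν : ∀ f g : M₀, f ≠ 0 → g ≠ 0 → ν (f * g) = ν f + ν g)
    {f : M₀} (hf : f ≠ 0) (n : ℕ) : ν (f ^ n) = n • ν f := by
  induction n with
  | zero => rw [pow_zero, zero_smul, map_one_of_map_mul hν]
  | succ n ih => rw [pow_succ, hν _ _ (pow_ne_zero _ hf) hf, ih, succ_nsmul]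

end MulToAdd

/-- The points `ν(f)/i` whose closure is `Δ d ν I₁ I₂ n₁ n₂`. -/
def levelPoints (d : ℕ) (ν : R → (Fin d → ℤ)) (I₁ I₂ : ℕ → Ideal R) (n₁ n₂ : ℕ) :
    Set (Fin d → ℝ) :=
  {x | ∃ i : ℕ, 0 < i ∧ ∃ f : R, f ≠ 0 ∧ f ∈ I₁ (i * n₁) * I₂ (i * n₂) ∧
    x = fun k => (ν f k : ℝ) / (i : ℝ)}

section ConvexBodies

variable {d : ℕ} {ν : R → (Fin d → ℤ)}
  (hν : ∀ f g : R, f ≠ 0 → g ≠ 0 → ν (f * g) = ν f + ν g)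
  {I₁ I₂ : ℕ → Ideal R} (h0₁ : I₁ 0 = ⊤) (h0₂ : I₂ 0 = ⊤)
  (hmul₁ : ∀ a b, I₁ a * I₁ b ≤ I₁ (a + b)) (hmul₂ : ∀ a b, I₂ a * I₂ b ≤ I₂ (a + b))
include hν h0₁ h0₂ hmul₁ hmul₂

theorem levelPoints_add_subset (m₁ m₂ n₁ n₂ : ℕ) :
    levelPoints d ν I₁ I₂ m₁ m₂ + levelPoints d ν I₁ I₂ n₁ n₂ ⊆
      levelPoints d ν I₁ I₂ (m₁ + n₁) (m₂ + n₂) := by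
  rintro _ ⟨_, ⟨i, hi, f, hf0, hf, rfl⟩, _, ⟨j, hj, g, hg0, hg, rfl⟩, rfl⟩
  refine ⟨i * j, Nat.mul_pos hi hj, f ^ j * g ^ i,
    mul_ne_zero (pow_ne_zero _ hf0) (pow_ne_zero _ hg0), ?_, ?_⟩
  · have hfg := mul_mem_mul_filtration hmul₁ hmul₂
      (pow_mem_mul_filtration h0₁ h0₂ hmul₁ hmul₂ hf j)
      (pow_mem_mul_filtration h0₁ h0₂ hmul₁ hmul₂ hg i)
    convert hfg using 3 <;> ring
  · have hi' : (i : ℝ) ≠ 0 := Nat.cast_ne_zero.mpr hi.ne'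
    have hj' : (j : ℝ) ≠ 0 := Nat.cast_ne_zero.mpr hj.ne'
    funext k
    rw [hν _ _ (pow_ne_zero _ hf0) (pow_ne_zero _ hg0), map_pow_of_map_mul hν hf0,
      map_pow_of_map_mul hν hg0]
    simp only [Pi.add_apply, nsmul_eq_mul, Pi.mul_apply, Pi.natCast_apply]
    push_cast
    field_simp

theorem natCast_smul_levelPoints_subset (n a b : ℕ) :
    (n : ℝ) • levelPoints d ν I₁ I₂ a b ⊆ levelPoints d ν I₁ I₂ (n * a) (n * b) := by
  rintro _ ⟨_, ⟨i, hi, f, hf0, hf, rfl⟩, rfl⟩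
  refine ⟨i, hi, f ^ n, pow_ne_zero _ hf0, ?_, ?_⟩
  · convert pow_mem_mul_filtration h0₁ h0₂ hmul₁ hmul₂ hf n using 3 <;> ring
  · funext k
    rw [map_pow_of_map_mul hν hf0]
    simp only [Pi.smul_apply, nsmul_eq_mul, smul_eq_mul]
    push_cast
    ring

theorem Δ_add_subset (m₁ m₂ n₁ n₂ : ℕ) :
    Δ d ν I₁ I₂ m₁ m₂ + Δ d ν I₁ I₂ n₁ n₂ ⊆ Δ d ν I₁ I₂ (m₁ + n₁) (m₂ + n₂) := by
  rintro _ ⟨x, hx, y, hy, rfl⟩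
  exact map_mem_closure₂ continuous_add hx hy fun _ hx' _ hy' =>
    levelPoints_add_subset hν h0₁ h0₂ hmul₁ hmul₂ m₁ m₂ n₁ n₂ ⟨_, hx', _, hy', rfl⟩

theorem natCast_smul_Δ_subset (n a b : ℕ) :
    (n : ℝ) • Δ d ν I₁ I₂ a b ⊆ Δ d ν I₁ I₂ (n * a) (n * b) :=
  (smul_closure_subset _ _).trans
    (closure_mono (natCast_smul_levelPoints_subset hν h0₁ h0₂ hmul₁ hmul₂ n a b))

end ConvexBodies

/-- **(Superadditivity of the convex bodies `Δ(n₁,n₂)` with respect to Minkowski sum.)**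
For `m_R`-filtrations `𝓘(1), 𝓘(2)` on a domain `R` and a `ℤ^d`-valued multiplicative
valuation `ν`, one has `Δ(m₁,m₂) + Δ(n₁,n₂) ⊆ Δ(m₁+n₁, m₂+n₂)` for all
`m₁, m₂, n₁, n₂ ∈ ℕ`; in particular `n₁Δ(1,0) + n₂Δ(0,1) ⊆ Δ(n₁,n₂)`. -/
theorem stmt_18 (d : ℕ) (ν : R → (Fin d → ℤ))
    (hν : ∀ f g : R, f ≠ 0 → g ≠ 0 → ν (f * g) = ν f + ν g)
    (I₁ I₂ : ℕ → Ideal R) (h0₁ : I₁ 0 = ⊤) (h0₂ : I₂ 0 = ⊤)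
    (hmul₁ : ∀ a b, I₁ a * I₁ b ≤ I₁ (a + b)) (hmul₂ : ∀ a b, I₂ a * I₂ b ≤ I₂ (a + b)) :
    (∀ m₁ m₂ n₁ n₂ : ℕ,
      Δ d ν I₁ I₂ m₁ m₂ + Δ d ν I₁ I₂ n₁ n₂ ⊆ Δ d ν I₁ I₂ (m₁ + n₁) (m₂ + n₂)) ∧
    (∀ n₁ n₂ : ℕ,
      (n₁ : ℝ) • Δ d ν I₁ I₂ 1 0 + (n₂ : ℝ) • Δ d ν I₁ I₂ 0 1 ⊆ Δ d ν I₁ I₂ n₁ n₂) := by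
  refine ⟨Δ_add_subset hν h0₁ h0₂ hmul₁ hmul₂, fun n₁ n₂ => ?_⟩
  calc (n₁ : ℝ) • Δ d ν I₁ I₂ 1 0 + (n₂ : ℝ) • Δ d ν I₁ I₂ 0 1
      ⊆ Δ d ν I₁ I₂ (n₁ * 1) (n₁ * 0) + Δ d ν I₁ I₂ (n₂ * 0) (n₂ * 1) :=
        Set.add_subset_add (natCast_smul_Δ_subset hν h0₁ h0₂ hmul₁ hmul₂ n₁ 1 0)
          (natCast_smul_Δ_subset hν h0₁ h0₂ hmul₁ hmul₂ n₂ 0 1)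
    _ ⊆ Δ d ν I₁ I₂ (n₁ * 1 + n₂ * 0) (n₁ * 0 + n₂ * 1) :=
        Δ_add_subset hν h0₁ h0₂ hmul₁ hmul₂ ..
    _ = Δ d ν I₁ I₂ n₁ n₂ := by simp

end
end
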